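/- arXiv:0905.0875 — 7 statements merged into one kernel-verified Lean document; each statement's English description precedes it below -/
import Mathlib

section
/- The derived subalgebra [K_0, K_0] has codimension one in K_0; equivalently, it equals the kernel of the functional φ defined by φ(K_n) = n. -/
/-!
The functional `φ` kills every bracket `⁅K m, K n⁆`, hence by bilinearity the whole derived
subalgebra. Conversely, every `K n - n • K 1` is a combination of at most three brackets, so
modulo the derived subalgebra every vector `x` is congruent to `φ x • K 1`; thus the kernel of
`φ` is contained in it, and the quotient is the line spanned by the image of `K 1`.
-/

def bracketSpan (R L : Type*) [CommRing R] [LieRing L] [LieAlgebra R L] : Submodule R L :=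
  Submodule.span R {x | ∃ a b : L, x = ⁅a, b⁆}

section Basis

variable {R L ι : Type*} [CommRing R] [LieRing L] [LieAlgebra R L]

theorem lie_mem_bracketSpan (x y : L) : ⁅x, y⁆ ∈ bracketSpan R L :=
  Submodule.subset_span ⟨x, y, rfl⟩

theorem lie_mem_of_basis (b : Module.Basis ι R L) {T : Submodule R L}
    (h : ∀ i j, ⁅b i, b j⁆ ∈ T) (x y : L) : ⁅x, y⁆ ∈ T := by
  let B : L →ₗ[R] L →ₗ[R] L ⧸ T :=
    (LieModule.toEnd R L L : L →ₗ[R] Module.End R L).compr₂ T.mkQ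
  have hB : B = 0 := LinearMap.ext_basis b b fun i j =>
    (Submodule.Quotient.mk_eq_zero T).2 (h i j)
  exact (Submodule.Quotient.mk_eq_zero T).1 (LinearMap.congr_fun₂ hB x y)

end Basis

section Witt

variable {V : Type} [LieRing V] [LieAlgebra ℂ V] {K : ℤ → V}
  (hbr : ∀ m n : ℤ, m ≠ -n →
    ⁅K m, K n⁆ = ((m : ℂ) - n) • K (m + n) - (m : ℂ) • K m + (n : ℂ) • K n)
  (hbr' : ∀ m : ℤ, ⁅K m, K (-m)⁆ = -((m : ℂ) • K m) - (m : ℂ) • K (-m))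
include hbr hbr'

theorem sub_smul_mem_bracketSpan {n : ℤ} (hn : n ≠ 0) :
    K n - (n : ℂ) • K 1 ∈ bracketSpan ℂ V := by
  rcases eq_or_ne n 1 with rfl | h1
  · simp
  rcases eq_or_ne n (-1) with rfl | hm1
  · have key : K (-1) - ((-1 : ℤ) : ℂ) • K 1 = -⁅K 1, K (-1)⁆ := by
      rw [hbr']; push_cast; module
    rw [key]
    exact neg_mem (lie_mem_bracketSpan _ _)
  have hA := hbr (n + 1) (-1) (by omega)
  rw [show n + 1 + -1 = n by ring] at hA
  -- the coefficients are chosen so that `K (n + 1)` and `K (-1)` cancel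
  have key : K n - (n : ℂ) • K 1 =
      (-((n : ℂ) - 1) / 2) • ⁅K (n + 1), K (-1)⁆ + (-((n : ℂ) + 1) / 2) • ⁅K n, K 1⁆ +
        (((n : ℂ) - 1) / 2) • ⁅K 1, K (-1)⁆ := by
    rw [hA, hbr n 1 (by omega), hbr' 1]
    push_cast
    match_scalars <;> ring
  rw [key]
  have hsmul (c : ℂ) (x y : V) : c • ⁅x, y⁆ ∈ bracketSpan ℂ V :=
    Submodule.smul_mem _ c (lie_mem_bracketSpan x y)
  exact add_mem (add_mem (hsmul _ _ _) (hsmul _ _ _)) (hsmul _ _ _)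

theorem map_lie_eq_zero {φ : V →ₗ[ℂ] ℂ} (hφ : ∀ n : ℤ, φ (K n) = n) (m n : ℤ) :
    φ ⁅K m, K n⁆ = 0 := by
  rcases eq_or_ne m (-n) with rfl | h
  · have h := hbr' (-n)
    rw [neg_neg] at h
    simp [h, hφ]
  · rw [hbr m n h]
    simp only [map_sub, map_add, map_smul, hφ, smul_eq_mul]
    push_cast
    ring

end Witt

theorem stmt2_general (V : Type) [LieRing V] [LieAlgebra ℂ V] (K : ℤ → V)
    (hbr : ∀ m n : ℤ, m ≠ -n →
      ⁅K m, K n⁆ = ((m : ℂ) - n) • K (m + n) - (m : ℂ) • K m + (n : ℂ) • K n)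
    (hbr' : ∀ m : ℤ, ⁅K m, K (-m)⁆ = -((m : ℂ) • K m) - (m : ℂ) • K (-m))
    (b : Module.Basis {n : ℤ // n ≠ 0} ℂ V) (hb : ∀ n : {n : ℤ // n ≠ 0}, b n = K n.1)
    (φ : V →ₗ[ℂ] ℂ) (hφ : ∀ n : ℤ, φ (K n) = n) :
    Submodule.span ℂ {x : V | ∃ a b : V, x = ⁅a, b⁆} = LinearMap.ker φ ∧
    Module.rank ℂ (V ⧸ Submodule.span ℂ {x : V | ∃ a b : V, x = ⁅a, b⁆}) = 1 := by
  change bracketSpan ℂ V = _ ∧ Module.rank ℂ (V ⧸ bracketSpan ℂ V) = 1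
  have hmkQ : (bracketSpan ℂ V).mkQ = φ.smulRight ((bracketSpan ℂ V).mkQ (K 1)) :=
    b.ext fun i => by
      simpa [hb, hφ, sub_eq_zero, Submodule.Quotient.mk_sub] using
        (Submodule.Quotient.mk_eq_zero _).2 (sub_smul_mem_bracketSpan hbr hbr' i.2)
  have hS : bracketSpan ℂ V = LinearMap.ker φ := by
    refine le_antisymm (Submodule.span_le.2 ?_) fun x hx => ?_
    · rintro _ ⟨x, y, rfl⟩
      refine lie_mem_of_basis b (fun i j => ?_) x y
      rw [hb, hb]
      exact map_lie_eq_zero hbr hbr' hφ _ _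
    · have hx0 := LinearMap.congr_fun hmkQ x
      rw [LinearMap.smulRight_apply, LinearMap.mem_ker.1 hx, zero_smul] at hx0
      exact (Submodule.Quotient.mk_eq_zero _).1 hx0
  have hsurj : Function.Surjective φ := fun c => ⟨c • K 1, by simp [hφ]⟩
  rw [hS, (φ.quotKerEquivOfSurjective hsurj).rank_eq, Module.rank_self]
  exact ⟨rfl, rfl⟩

/-- The derived subalgebra `[K₀, K₀]` (the span of all brackets) equals the kernel of the
functional `φ` with `φ (K n) = n`, and has codimension one. -/
theorem stmt2 (V : Type) [LieRing V] [LieAlgebra ℂ V] (K : ℤ → V)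
    (hK0 : K 0 = 0)
    (hbr : ∀ m n : ℤ, m ≠ -n →
      ⁅K m, K n⁆ = ((m : ℂ) - n) • K (m + n) - (m : ℂ) • K m + (n : ℂ) • K n)
    (hbr' : ∀ m : ℤ, ⁅K m, K (-m)⁆ = -((m : ℂ) • K m) - (m : ℂ) • K (-m))
    (b : Module.Basis {n : ℤ // n ≠ 0} ℂ V) (hb : ∀ n : {n : ℤ // n ≠ 0}, b n = K n.1)
    (φ : V →ₗ[ℂ] ℂ) (hφ : ∀ n : ℤ, φ (K n) = n) :
    Submodule.span ℂ {x : V | ∃ a b : V, x = ⁅a, b⁆} = LinearMap.ker φ ∧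
    Module.rank ℂ (V ⧸ Submodule.span ℂ {x : V | ∃ a b : V, x = ⁅a, b⁆}) = 1 :=
  stmt2_general V K hbr hbr' b hb φ hφ
end

section
/- Every element of K_0 is a linear combination of K_1 and elements of the derived subalgebra [K_0, K_0]; in particular K_{-1}, K_2, K_{-2} lie in the span of K_1 and commutators, and by induction so does every K_n. -/
/-! From `[K n, K 1] = (n - 1) K (n + 1) - n K n + K 1` for `n ≥ 2` and its mirror image
`[K (-n), K (-1)] = -(n - 1) K (-n - 1) + n K (-n) - K (-1)`, the generator `K (±(n + 1))` is,
modulo commutators, a combination of `K (±n)`, `K (±1)` and `K 1`. So everything reduces to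
`K (-1)`, `K 2`, `K (-2)`, which the brackets `[K 1, K (-1)]`, `[K 2, K (-1)]`, `[K (-2), K 1]`
express through `K 1` and commutators. -/

namespace KZeroLieAlgebra

variable {F V : Type*} [Field F] [LieRing V] [LieAlgebra F V]
  {K : ℤ → V} {S : Submodule F V}

theorem neg_one_mem
    (hbr' : ∀ m : ℤ, ⁅K m, K (-m)⁆ = -((m : F) • K m) - (m : F) • K (-m))
    (hS : ∀ x y : V, ⁅x, y⁆ ∈ S) (h1 : K 1 ∈ S) : K (-1) ∈ S := by
  have h : K (-1) = -⁅K 1, K (-1)⁆ - K 1 := by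
    rw [hbr' 1]; push_cast; module
  rw [h]
  exact S.sub_mem (S.neg_mem (hS _ _)) h1

section Generation

variable [CharZero F]
  (hbr : ∀ m n : ℤ, m ≠ -n →
    ⁅K m, K n⁆ = ((m : F) - n) • K (m + n) - (m : F) • K m + (n : F) • K n)
  (hS : ∀ x y : V, ⁅x, y⁆ ∈ S)
include hbr hS

theorem two_mem (h1 : K 1 ∈ S) (hm1 : K (-1) ∈ S) : K 2 ∈ S := by
  have h : (2 : F) • K 2 = (3 : F) • K 1 - K (-1) - ⁅K 2, K (-1)⁆ := by
    rw [hbr 2 (-1) (by norm_num)]; norm_num; module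
  rw [← S.smul_mem_iff (two_ne_zero (α := F)), h]
  exact S.sub_mem (S.sub_mem (S.smul_mem _ h1) hm1) (hS _ _)

theorem neg_two_mem (h1 : K 1 ∈ S) (hm1 : K (-1) ∈ S) : K (-2) ∈ S := by
  have h : (2 : F) • K (-2) = ⁅K (-2), K 1⁆ + (3 : F) • K (-1) - K 1 := by
    rw [hbr (-2) 1 (by norm_num)]; norm_num; module
  rw [← S.smul_mem_iff (two_ne_zero (α := F)), h]
  exact S.sub_mem (S.add_mem (hS _ _) (S.smul_mem _ hm1)) h1

theorem add_one_mem (h1 : K 1 ∈ S) {n : ℤ} (hn : 2 ≤ n) (hKn : K n ∈ S) : K (n + 1) ∈ S := by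
  have hc : (n : F) - 1 ≠ 0 := sub_ne_zero.mpr (by exact_mod_cast (by omega : n ≠ 1))
  have h : ((n : F) - 1) • K (n + 1) = ⁅K n, K 1⁆ + (n : F) • K n - K 1 := by
    rw [hbr n 1 (by omega)]; push_cast; module
  rw [← S.smul_mem_iff hc, h]
  exact S.sub_mem (S.add_mem (hS _ _) (S.smul_mem _ hKn)) h1

theorem neg_add_one_mem (hm1 : K (-1) ∈ S) {n : ℤ} (hn : 2 ≤ n) (hKn : K (-n) ∈ S) :
    K (-(n + 1)) ∈ S := by
  have hc : (n : F) - 1 ≠ 0 := sub_ne_zero.mpr (by exact_mod_cast (by omega : n ≠ 1))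
  have h : ((n : F) - 1) • K (-(n + 1)) = (n : F) • K (-n) - K (-1) - ⁅K (-n), K (-1)⁆ := by
    rw [hbr (-n) (-1) (by omega), show -n + -1 = -(n + 1) by ring]; push_cast; module
  rw [← S.smul_mem_iff hc, h]
  exact S.sub_mem (S.sub_mem (S.smul_mem _ hKn) hm1) (hS _ _)

theorem mem_of_ne_zero (h1 : K 1 ∈ S)
    (hbr' : ∀ m : ℤ, ⁅K m, K (-m)⁆ = -((m : F) • K m) - (m : F) • K (-m))
    {n : ℤ} (hn : n ≠ 0) : K n ∈ S := by
  have hm1 := neg_one_mem hbr' hS h1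
  have hpos : ∀ n : ℤ, 2 ≤ n → K n ∈ S :=
    Int.leInduction (two_mem hbr hS h1 hm1) fun n hn => add_one_mem hbr hS h1 hn
  have hneg : ∀ n : ℤ, 2 ≤ n → K (-n) ∈ S :=
    Int.leInduction (neg_two_mem hbr hS h1 hm1) fun n hn => neg_add_one_mem hbr hS hm1 hn
  rcases lt_trichotomy n 0 with hlt | rfl | hgt
  · obtain rfl | hle := (show n = -1 ∨ n ≤ -2 by omega)
    · exact hm1
    · simpa using hneg (-n) (by omega)
  · exact absurd rfl hn
  · obtain rfl | hle := (show n = 1 ∨ 2 ≤ n by omega)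
    · exact h1
    · exact hpos n hle

end Generation

end KZeroLieAlgebra

theorem stmt3_general (V : Type) [LieRing V] [LieAlgebra ℂ V] (K : ℤ → V)
    (hbr : ∀ m n : ℤ, m ≠ -n →
      ⁅K m, K n⁆ = ((m : ℂ) - n) • K (m + n) - (m : ℂ) • K m + (n : ℂ) • K n)
    (hbr' : ∀ m : ℤ, ⁅K m, K (-m)⁆ = -((m : ℂ) • K m) - (m : ℂ) • K (-m))
    (b : Module.Basis {n : ℤ // n ≠ 0} ℂ V) (hb : ∀ n : {n : ℤ // n ≠ 0}, b n = K n.1) :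
    Submodule.span ℂ {K 1} ⊔ Submodule.span ℂ {x : V | ∃ a b : V, x = ⁅a, b⁆} = ⊤ := by
  set S := Submodule.span ℂ {K 1} ⊔ Submodule.span ℂ {x : V | ∃ a b : V, x = ⁅a, b⁆}
  have hS : ∀ x y : V, ⁅x, y⁆ ∈ S :=
    fun x y => Submodule.mem_sup_right (Submodule.subset_span ⟨x, y, rfl⟩)
  have h1 : K 1 ∈ S := Submodule.mem_sup_left (Submodule.mem_span_singleton_self _)
  rw [eq_top_iff, ← b.span_eq, Submodule.span_le]
  rintro _ ⟨n, rfl⟩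
  rw [hb]
  exact KZeroLieAlgebra.mem_of_ne_zero hbr hS h1 hbr' n.2

/-- Every element of `K₀` is a linear combination of `K 1` and elements of the derived
subalgebra `[K₀, K₀]`. -/
theorem stmt3 (V : Type) [LieRing V] [LieAlgebra ℂ V] (K : ℤ → V)
    (hK0 : K 0 = 0)
    (hbr : ∀ m n : ℤ, m ≠ -n →
      ⁅K m, K n⁆ = ((m : ℂ) - n) • K (m + n) - (m : ℂ) • K m + (n : ℂ) • K n)
    (hbr' : ∀ m : ℤ, ⁅K m, K (-m)⁆ = -((m : ℂ) • K m) - (m : ℂ) • K (-m))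
    (b : Module.Basis {n : ℤ // n ≠ 0} ℂ V) (hb : ∀ n : {n : ℤ // n ≠ 0}, b n = K n.1) :
    Submodule.span ℂ {K 1} ⊔ Submodule.span ℂ {x : V | ∃ a b : V, x = ⁅a, b⁆} = ⊤ :=
  stmt3_general V K hbr hbr' b hb
end

section
/- The set consisting of [K_n, K_1] and [K_{-n}, K_{-1}] for n > 1, together with [K_{-2}, K_1], [K_2, K_{-1}], and [K_1, K_{-1}], forms a vector-space basis of the derived subalgebra [K_0, K_0]. -/
/-!
The functional `K n ↦ n` kills every bracket, so `[K₀, K₀]` lies in its kernel. After adjoining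
`K 1`, every member of the family is a nonzero multiple of one basis vector `K (σ k)` plus basis
vectors of smaller height (`K 1` has height `0`, `K n` height `|n|` otherwise), where
`σ = leadingIndex` is a bijection onto the index set of the basis. Such a triangular family is
again a basis, so the family is linearly independent and spans a complement of `K 1` made of
brackets; hence it spans the whole kernel, which is therefore `[K₀, K₀]`.
-/

open Submodule

namespace Module.Basis

variable {ι κ 𝕜 M : Type*} [Field 𝕜] [AddCommGroup M] [Module 𝕜 M]

theorem coord_apply_eq_zero_of_mem_span_lt (b : Basis ι 𝕜 M) (μ : ι → ℕ) {i : ι} {N : ℕ}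
    (hN : N ≤ μ i) {x : M} (hx : x ∈ span 𝕜 (b '' {j | μ j < N})) : b.coord i x = 0 := by
  refine (span_le (p := LinearMap.ker (b.coord i)) |>.mpr ?_) hx
  rintro _ ⟨j, hj, rfl⟩
  have hji : j ≠ i := by rintro rfl; exact absurd hN (not_le.mpr hj)
  simp [coord_apply, repr_self, hji]

theorem linearIndependent_of_triangular (b : Basis ι 𝕜 M) (μ : ι → ℕ) {e : κ → ι}
    (he : Function.Injective e) {w : κ → M}
    (hw : ∀ k, ∃ c ≠ (0 : 𝕜), w k - c • b (e k) ∈ span 𝕜 (b '' {i | μ i < μ (e k)})) :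
    LinearIndependent 𝕜 w := by
  choose c hc0 hc using hw
  have coord_w : ∀ j k, μ (e k) ≤ μ (e j) → b.coord (e j) (w k) = b.coord (e j) (c k • b (e k)) :=
    fun j k hjk => sub_eq_zero.mp <| by
      rw [← map_sub]; exact b.coord_apply_eq_zero_of_mem_span_lt μ hjk (hc k)
  rw [linearIndependent_iff']
  intro s l hl
  by_contra! hne
  classical
  obtain ⟨j, hj, hjmax⟩ := (s.filter (l · ≠ 0)).exists_max_image (μ ∘ e)
    (by simpa [Finset.filter_nonempty_iff] using hne)
  rw [Finset.mem_filter] at hj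
  have hsum := congrArg (b.coord (e j)) hl
  rw [map_sum, map_zero, Finset.sum_eq_single j] at hsum
  · simp [coord_w j j le_rfl, hc0 j, hj.2] at hsum
  · intro k hk hkj
    by_cases hlk : l k = 0
    · simp [hlk]
    · simp [coord_w j k (hjmax k (Finset.mem_filter.mpr ⟨hk, hlk⟩)), he.ne hkj]
  · exact fun h => absurd hj.1 h

theorem span_eq_top_of_triangular (b : Basis ι 𝕜 M) (μ : ι → ℕ) {e : κ → ι}
    (he : Function.Surjective e) {w : κ → M}
    (hw : ∀ k, ∃ c ≠ (0 : 𝕜), w k - c • b (e k) ∈ span 𝕜 (b '' {i | μ i < μ (e k)})) :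
    span 𝕜 (Set.range w) = ⊤ := by
  choose c hc0 hc using hw
  have hb : ∀ N i, μ i = N → b i ∈ span 𝕜 (Set.range w) := by
    intro N
    induction N using Nat.strong_induction_on with
    | _ N ih =>
      rintro i rfl
      obtain ⟨k, rfl⟩ := he i
      have hlow : span 𝕜 (b '' {i | μ i < μ (e k)}) ≤ span 𝕜 (Set.range w) :=
        span_le.mpr (by rintro _ ⟨j, hj, rfl⟩; exact ih _ hj j rfl)
      have hbk : b (e k) = (c k)⁻¹ • (w k - (w k - c k • b (e k))) := by
        rw [sub_sub_cancel, smul_smul, inv_mul_cancel₀ (hc0 k), one_smul]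
      rw [hbk]
      exact smul_mem _ _ (sub_mem (subset_span ⟨k, rfl⟩) (hlow (hc k)))
  rw [eq_top_iff, ← b.span_eq, span_le]
  rintro _ ⟨i, rfl⟩
  exact hb _ i rfl

theorem map_lie_eq_zero {L : Type*} [LieRing L] [LieAlgebra 𝕜 L] (b : Basis ι 𝕜 L)
    (φ : L →ₗ[𝕜] 𝕜) (h : ∀ i j, φ ⁅b i, b j⁆ = 0) (x y : L) : φ ⁅x, y⁆ = 0 := by
  have : (LieAlgebra.ad 𝕜 L : L →ₗ[𝕜] Module.End 𝕜 L).compr₂ φ = 0 :=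
    b.ext fun i => b.ext fun j => h i j
  exact LinearMap.congr_fun₂ this x y

end Module.Basis

theorem LinearMap.ker_le_span_of_span_insert_eq_top {𝕜 M : Type*} [Field 𝕜] [AddCommGroup M]
    [Module 𝕜 M] (φ : M →ₗ[𝕜] 𝕜) {S : Set M} (hS : S ⊆ LinearMap.ker φ) {v : M} (hv : φ v ≠ 0)
    (htop : span 𝕜 (insert v S) = ⊤) : LinearMap.ker φ ≤ span 𝕜 S := by
  intro x hx
  obtain ⟨a, z, hz, rfl⟩ := mem_span_insert.mp (htop ▸ mem_top : x ∈ span 𝕜 (insert v S))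
  have hφz : φ z = 0 := span_le.mpr hS hz
  have ha : a = 0 := by simpa [hφz, hv] using hx
  simpa [ha] using hz

namespace KZero

variable {V : Type} [LieRing V] [LieAlgebra ℂ V]

def SatisfiesKBrackets (K : ℤ → V) : Prop :=
  (∀ m n : ℤ, m ≠ -n →
    ⁅K m, K n⁆ = ((m : ℂ) - n) • K (m + n) - (m : ℂ) • K m + (n : ℂ) • K n) ∧
  ∀ m : ℤ, ⁅K m, K (-m)⁆ = -((m : ℂ) • K m) - (m : ℂ) • K (-m)

def bracketFamily (K : ℤ → V) : ℤ → V := fun n =>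
  if 2 ≤ n then ⁅K n, K 1⁆
  else if n ≤ -2 then ⁅K n, K (-1)⁆
  else if n = 1 then ⁅K (-2), K 1⁆
  else if n = 0 then ⁅K 1, K (-1)⁆
  else ⁅K 2, K (-1)⁆

omit [LieAlgebra ℂ V] in
theorem exists_bracketFamily_eq_lie (K : ℤ → V) (n : ℤ) :
    ∃ x y : V, bracketFamily K n = ⁅x, y⁆ := by
  unfold bracketFamily
  split_ifs <;> exact ⟨_, _, rfl⟩

def leadingIndex : Option ℤ → ℤ
  | none => 1
  | some n =>
    if 2 ≤ n then n + 1
    else if n ≤ -2 then n - 1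
    else if n = 1 then -2
    else if n = 0 then -1
    else 2

theorem leadingIndex_ne_zero (k : Option ℤ) : leadingIndex k ≠ 0 := by
  rcases k with _ | n <;> grind [leadingIndex]

theorem bijective_leadingIndex :
    Function.Bijective fun k => (⟨leadingIndex k, leadingIndex_ne_zero k⟩ : {n : ℤ // n ≠ 0}) := by
  refine ⟨fun k l h => ?_, fun ⟨m, hm⟩ => ?_⟩
  · rcases k with _ | m <;> rcases l with _ | n <;> grind [leadingIndex]
  · suffices ∃ k, leadingIndex k = m from this.imp fun _ => Subtype.ext
    rcases (by omega : m ≤ -3 ∨ m = -2 ∨ m = -1 ∨ m = 1 ∨ m = 2 ∨ 3 ≤ m) with h | h | h | h | h | h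
    exacts [⟨some (m + 1), by grind [leadingIndex]⟩, ⟨some 1, by grind [leadingIndex]⟩,
      ⟨some 0, by grind [leadingIndex]⟩, ⟨none, h.symm⟩, ⟨some (-1), by grind [leadingIndex]⟩,
      ⟨some (m - 1), by grind [leadingIndex]⟩]

def height (m : ℤ) : ℕ := if m = 1 then 0 else m.natAbs

theorem bracketFamily_sub_of_two_le {K : ℤ → V} (hK : SatisfiesKBrackets K) {n : ℤ}
    (hn : 2 ≤ n) : bracketFamily K n - ((n : ℂ) - 1) • K (n + 1) = -(n : ℂ) • K n + K 1 := by
  rw [bracketFamily, if_pos hn, hK.1 n 1 (by omega)]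
  push_cast
  module

theorem bracketFamily_sub_of_le_neg_two {K : ℤ → V} (hK : SatisfiesKBrackets K) {n : ℤ}
    (hn : n ≤ -2) : bracketFamily K n - ((n : ℂ) + 1) • K (n - 1) = -(n : ℂ) • K n - K (-1) := by
  rw [bracketFamily, if_neg (by omega), if_pos hn, hK.1 n (-1) (by omega), ← sub_eq_add_neg]
  push_cast
  module

theorem bracketFamily_one_sub {K : ℤ → V} (hK : SatisfiesKBrackets K) :
    bracketFamily K 1 - (2 : ℂ) • K (-2) = (-3 : ℂ) • K (-1) + K 1 := by
  rw [bracketFamily, if_neg (by omega), if_neg (by omega), if_pos rfl, hK.1 (-2) 1 (by omega)]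
  norm_num
  module

theorem bracketFamily_zero_sub {K : ℤ → V} (hK : SatisfiesKBrackets K) :
    bracketFamily K 0 - (-1 : ℂ) • K (-1) = -K 1 := by
  rw [bracketFamily, if_neg (by omega), if_neg (by omega), if_neg (by omega), if_pos rfl, hK.2 1]
  push_cast
  module

theorem bracketFamily_neg_one_sub {K : ℤ → V} (hK : SatisfiesKBrackets K) :
    bracketFamily K (-1) - (-2 : ℂ) • K 2 = (3 : ℂ) • K 1 - K (-1) := by
  rw [bracketFamily, if_neg (by omega), if_neg (by omega), if_neg (by omega), if_neg (by omega),
    hK.1 2 (-1) (by omega)]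
  norm_num
  module

theorem bracketFamily_triangular {K : ℤ → V} (hK : SatisfiesKBrackets K)
    (b : Module.Basis {n : ℤ // n ≠ 0} ℂ V) (hb : ∀ n : {n : ℤ // n ≠ 0}, b n = K n.1)
    (k : Option ℤ) :
    ∃ c ≠ (0 : ℂ),
      k.elim (K 1) (bracketFamily K) - c • b ⟨leadingIndex k, leadingIndex_ne_zero k⟩ ∈
        span ℂ (b '' {i | height i.1 < height (leadingIndex k)}) := by
  have hmem : ∀ {N : ℕ} (m : ℤ) (hm : m ≠ 0), height m < N →
      K m ∈ span ℂ (b '' {i | height i.1 < N}) :=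
    fun m hm h => hb ⟨m, hm⟩ ▸ subset_span ⟨⟨m, hm⟩, h, rfl⟩
  rw [hb ⟨leadingIndex k, leadingIndex_ne_zero k⟩]
  rcases k with _ | n
  · exact ⟨1, one_ne_zero, by simp [leadingIndex]⟩
  simp only [Option.elim_some]
  rcases (by omega : 2 ≤ n ∨ n ≤ -2 ∨ n = 1 ∨ n = 0 ∨ n = -1) with hn | hn | rfl | rfl | rfl
  · refine ⟨(n : ℂ) - 1, by exact_mod_cast (by omega : n - 1 ≠ 0), ?_⟩
    rw [leadingIndex, if_pos hn, bracketFamily_sub_of_two_le hK hn]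
    exact add_mem (smul_mem _ _ (hmem n (by omega) (by grind [height, leadingIndex])))
      (hmem 1 one_ne_zero (by grind [height, leadingIndex]))
  · refine ⟨(n : ℂ) + 1, by exact_mod_cast (by omega : n + 1 ≠ 0), ?_⟩
    rw [leadingIndex, if_neg (by omega), if_pos hn, bracketFamily_sub_of_le_neg_two hK hn]
    exact sub_mem (smul_mem _ _ (hmem n (by omega) (by grind [height, leadingIndex])))
      (hmem (-1) (by omega) (by grind [height, leadingIndex]))
  · refine ⟨2, two_ne_zero, ?_⟩
    rw [show leadingIndex (some 1) = -2 from rfl, bracketFamily_one_sub hK]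
    exact add_mem (smul_mem _ _ (hmem (-1) (by omega) (by grind [height, leadingIndex])))
      (hmem 1 one_ne_zero (by grind [height, leadingIndex]))
  · refine ⟨-1, by norm_num, ?_⟩
    rw [show leadingIndex (some 0) = -1 from rfl, bracketFamily_zero_sub hK]
    exact neg_mem (hmem 1 one_ne_zero (by grind [height, leadingIndex]))
  · refine ⟨-2, by norm_num, ?_⟩
    rw [show leadingIndex (some (-1)) = 2 from rfl, bracketFamily_neg_one_sub hK]
    exact sub_mem (smul_mem _ _ (hmem 1 one_ne_zero (by grind [height, leadingIndex])))
      (hmem (-1) (by omega) (by grind [height, leadingIndex]))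

noncomputable def degree (b : Module.Basis {n : ℤ // n ≠ 0} ℂ V) : V →ₗ[ℂ] ℂ :=
  b.constr ℂ fun i => (i.1 : ℂ)

theorem degree_apply {K : ℤ → V} (b : Module.Basis {n : ℤ // n ≠ 0} ℂ V)
    (hb : ∀ n : {n : ℤ // n ≠ 0}, b n = K n.1) {m : ℤ} (hm : m ≠ 0) : degree b (K m) = m := by
  rw [← hb ⟨m, hm⟩, degree, Module.Basis.constr_basis]

theorem degree_lie {K : ℤ → V} (hK : SatisfiesKBrackets K) (b : Module.Basis {n : ℤ // n ≠ 0} ℂ V)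
    (hb : ∀ n : {n : ℤ // n ≠ 0}, b n = K n.1) (x y : V) : degree b ⁅x, y⁆ = 0 := by
  refine b.map_lie_eq_zero _ (fun ⟨i, hi⟩ ⟨j, hj⟩ => ?_) x y
  simp only [hb]
  by_cases hij : i = -j
  · obtain rfl : j = -i := by omega
    rw [hK.2 i]
    simp [degree_apply b hb hi, degree_apply b hb hj]
  · rw [hK.1 i j hij]
    simp [degree_apply b hb hi, degree_apply b hb hj, degree_apply b hb (by omega : i + j ≠ 0)]
    ring

end KZero

open KZero in
theorem stmt4_general (V : Type) [LieRing V] [LieAlgebra ℂ V] (K : ℤ → V)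
    (hbr : ∀ m n : ℤ, m ≠ -n →
      ⁅K m, K n⁆ = ((m : ℂ) - n) • K (m + n) - (m : ℂ) • K m + (n : ℂ) • K n)
    (hbr' : ∀ m : ℤ, ⁅K m, K (-m)⁆ = -((m : ℂ) • K m) - (m : ℂ) • K (-m))
    (b : Module.Basis {n : ℤ // n ≠ 0} ℂ V) (hb : ∀ n : {n : ℤ // n ≠ 0}, b n = K n.1) :
    let f : ℤ → V := fun n =>
      if 2 ≤ n then ⁅K n, K 1⁆
      else if n ≤ -2 then ⁅K n, K (-1)⁆
      else if n = 1 then ⁅K (-2), K 1⁆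
      else if n = 0 then ⁅K 1, K (-1)⁆
      else ⁅K 2, K (-1)⁆
    LinearIndependent ℂ f ∧
    Submodule.span ℂ (Set.range f) = Submodule.span ℂ {x : V | ∃ a b : V, x = ⁅a, b⁆} := by
  have hK : SatisfiesKBrackets K := ⟨hbr, hbr'⟩
  have htri := bracketFamily_triangular hK b hb
  have hrange : Set.range (bracketFamily K) ⊆ {x : V | ∃ a b : V, x = ⁅a, b⁆} := by
    rintro _ ⟨n, rfl⟩
    exact exists_bracketFamily_eq_lie K n
  have hker : span ℂ {x : V | ∃ a b : V, x = ⁅a, b⁆} ≤ LinearMap.ker (degree b) :=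
    span_le.mpr fun _ ⟨x, y, hxy⟩ => hxy ▸ degree_lie hK b hb x y
  have htop := b.span_eq_top_of_triangular _ bijective_leadingIndex.2 htri
  rw [Option.range_elim] at htop
  refine ⟨(b.linearIndependent_of_triangular _ bijective_leadingIndex.1 htri).comp some
    (Option.some_injective ℤ), le_antisymm (span_mono hrange) (hker.trans ?_)⟩
  exact (degree b).ker_le_span_of_span_insert_eq_top ((hrange.trans subset_span).trans hker)
    (by simp [degree_apply b hb one_ne_zero]) htop

/-- The family `⁅K n, K 1⁆`, `⁅K (-n), K (-1)⁆` for `n > 1` together with `⁅K (-2), K 1⁆`,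
`⁅K 2, K (-1)⁆`, `⁅K 1, K (-1)⁆` is a basis of the derived subalgebra `[K₀, K₀]`. -/
theorem stmt4 (V : Type) [LieRing V] [LieAlgebra ℂ V] (K : ℤ → V)
    (hK0 : K 0 = 0)
    (hbr : ∀ m n : ℤ, m ≠ -n →
      ⁅K m, K n⁆ = ((m : ℂ) - n) • K (m + n) - (m : ℂ) • K m + (n : ℂ) • K n)
    (hbr' : ∀ m : ℤ, ⁅K m, K (-m)⁆ = -((m : ℂ) • K m) - (m : ℂ) • K (-m))
    (b : Module.Basis {n : ℤ // n ≠ 0} ℂ V) (hb : ∀ n : {n : ℤ // n ≠ 0}, b n = K n.1) :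
    let f : ℤ → V := fun n =>
      if 2 ≤ n then ⁅K n, K 1⁆
      else if n ≤ -2 then ⁅K n, K (-1)⁆
      else if n = 1 then ⁅K (-2), K 1⁆
      else if n = 0 then ⁅K 1, K (-1)⁆
      else ⁅K 2, K (-1)⁆
    LinearIndependent ℂ f ∧
    Submodule.span ℂ (Set.range f) = Submodule.span ℂ {x : V | ∃ a b : V, x = ⁅a, b⁆} :=
  stmt4_general V K hbr hbr' b hb
end

section
/- The second Lie algebra cohomology H^2(K_0, ℂ) is one dimensional: every 2-cocycle ω on K_0 is cohomologous to a scalar multiple of the cocycle ω(K_m, K_n) = δ_{m,-n} · m(m²-1)/12, and this cocycle is not a coboundary. -/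
/-!
Put `f m n = ω (K m) (K n)`. Subtracting a coboundary whose values `h j = μ (K j)` solve a
first-order recurrence normalizes `f` so that `f 1 n = 0` for `n ≠ -1` and
`f 2 (-1) = f 2 (-2) = 0`. The cocycle identity on `K (-1), K 1, K n` then shows that
`n ↦ f n (-1)` is constant on `n ≥ 2` and on `n ≤ -1`, so `f n (-1) = 0` for `n ≠ 1`; hence
the normalization is invariant under `f ↦ f (-·) (-·)`. With one argument `K 1` the identity
also relates the degrees `s = m + n` and `s + 1`:
`(m + n) f m n = (m - 1) f (m + 1) n + (n - 1) f m (n + 1)`. This kills degree `1`, then all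
negative degrees, and by the reflection all positive ones. In degree `0` it becomes a
recurrence forcing `f m (-m) = f 1 (-1) (4m - m³)/3`, which is `-4 f 1 (-1)` times the Virasoro
cocycle plus the coboundary of a constant. Finally no `μ` matches the Virasoro cocycle at
`(1,-1), (2,-1), (1,-2), (2,-2)`.
-/

namespace KZero

/-- `coboundary h m n = μ ⁅K m, K n⁆` for the functional with `μ (K j) = h j`. -/
def coboundary (h : ℤ → ℂ) (m n : ℤ) : ℂ :=
  ((m : ℂ) - n) * h (m + n) - m * h m + n * h n

noncomputable def virasoro (m n : ℤ) : ℂ :=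
  if m = -n then (m : ℂ) * ((m : ℂ) ^ 2 - 1) / 12 else 0

theorem coboundary_add (h h' : ℤ → ℂ) (m n : ℤ) :
    coboundary (h + h') m n = coboundary h m n + coboundary h' m n := by
  simp only [coboundary, Pi.add_apply]
  ring

theorem coboundary_ite (κ : ℂ) (m n : ℤ) :
    coboundary (fun z => if z = 0 then 0 else κ) m n = if m = -n then -2 * κ * m else 0 := by
  simp only [coboundary]
  split_ifs <;> first | omega | (push_cast [*] at *; ring)

structure IsCocycle (f : ℤ → ℤ → ℂ) : Prop where
  zero_right : ∀ m, f m 0 = 0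
  antisymm : ∀ m n, f m n = -f n m
  cocycle : ∀ l m n,
    coboundary (f · n) l m + coboundary (f · l) m n + coboundary (f · m) n l = 0

theorem isCocycle_coboundary (h : ℤ → ℂ) : IsCocycle (coboundary h) where
  zero_right m := by simp [coboundary]
  antisymm m n := by simp only [coboundary, add_comm n m]; ring
  cocycle l m n := by simp only [coboundary]; push_cast; ring_nf

namespace IsCocycle

variable {f g : ℤ → ℤ → ℂ}

theorem sub (hf : IsCocycle f) (hg : IsCocycle g) : IsCocycle (f - g) where
  zero_right m := by simp [hf.zero_right, hg.zero_right]
  antisymm m n := by simp only [Pi.sub_apply]; rw [hf.antisymm, hg.antisymm]; ring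
  cocycle l m n := by
    have hfc := hf.cocycle l m n
    have hgc := hg.cocycle l m n
    simp only [coboundary, Pi.sub_apply] at hfc hgc ⊢
    linear_combination hfc - hgc

theorem comp_neg (hf : IsCocycle f) : IsCocycle fun m n => f (-m) (-n) where
  zero_right m := by simp [hf.zero_right]
  antisymm m n := hf.antisymm _ _
  cocycle l m n := by
    have := hf.cocycle (-l) (-m) (-n)
    simp only [coboundary, neg_add, Int.cast_neg] at this ⊢
    linear_combination -this

theorem zero_left (hf : IsCocycle f) (n : ℤ) : f 0 n = 0 := by
  rw [hf.antisymm, hf.zero_right, neg_zero]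

theorem diag (hf : IsCocycle f) (m : ℤ) : f m m = 0 := by
  linear_combination hf.antisymm m m / 2

theorem jacobi (hf : IsCocycle f) (l m n : ℤ) :
    ((l : ℂ) - m) * f (l + m) n + ((m : ℂ) - n) * f (m + n) l + ((n : ℂ) - l) * f (n + l) m
      + ((l : ℂ) + m) * f l m + ((m : ℂ) + n) * f m n + ((n : ℂ) + l) * f n l = 0 := by
  have := hf.cocycle l m n
  simp only [coboundary] at this
  linear_combination this + (m : ℂ) * hf.antisymm l m + (n : ℂ) * hf.antisymm m n
    + (l : ℂ) * hf.antisymm n l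

end IsCocycle

theorem exists_seq_recurrence (p q r : ℕ → ℂ) (hp : ∀ k, p k ≠ 0) (x : ℂ) :
    ∃ s : ℕ → ℂ, s 0 = x ∧ ∀ k, p k * s (k + 1) + q k * s k = r k := by
  let s : ℕ → ℂ := fun k => Nat.rec x (fun k sk => (r k - q k * sk) / p k) k
  refine ⟨s, rfl, fun k => ?_⟩
  change p k * ((r k - q k * s k) / p k) + q k * s k = r k
  field_simp [hp k]
  ring

theorem exists_int_recurrence (a : ℤ → ℂ) (x y : ℂ) :
    ∃ h : ℤ → ℂ, h 0 = 0 ∧ h 1 = 0 ∧ h 2 = x ∧ h (-1) = y ∧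
      ∀ n : ℤ, (2 ≤ n ∨ n ≤ -2) → (1 - (n : ℂ)) * h (n + 1) + n * h n = a n := by
  obtain ⟨s, hs0, hs⟩ := exists_seq_recurrence (fun k => -((k : ℂ) + 1)) (fun k => (k : ℂ) + 2)
    (fun k => a (k + 2)) (fun k => neg_ne_zero.mpr k.cast_add_one_ne_zero) x
  obtain ⟨t, ht0, ht⟩ := exists_seq_recurrence (fun k => -((k : ℂ) + 2)) (fun k => (k : ℂ) + 3)
    (fun k => a (-k - 2)) (fun k => neg_ne_zero.mpr (by norm_cast)) y
  let h : ℤ → ℂ := fun z =>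
    if 2 ≤ z then s (z - 2).toNat else if z ≤ -1 then t (-1 - z).toNat else 0
  have hpos (k : ℕ) : h (k + 2) = s k := by simp [h]
  have hneg (k : ℕ) : h (-1 - k) = t k := by simp [h]; omega
  refine ⟨h, by simp [h], by simp [h], by simpa [hs0] using hpos 0, by simpa [ht0] using hneg 0, ?_⟩
  rintro n (hn | hn)
  · obtain ⟨k, rfl⟩ : ∃ k : ℕ, n = k + 2 := ⟨(n - 2).toNat, by omega⟩
    have hsucc := hpos (k + 1)
    rw [show ((k + 1 : ℕ) : ℤ) + 2 = k + 2 + 1 by push_cast; ring] at hsucc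
    rw [hsucc, hpos k]
    push_cast
    linear_combination hs k
  · obtain ⟨k, rfl⟩ : ∃ k : ℕ, n = -1 - (k + 1 : ℕ) := ⟨(-n - 2).toNat, by omega⟩
    rw [show -1 - ((k + 1 : ℕ) : ℤ) + 1 = -1 - k by push_cast; ring, hneg k, hneg (k + 1)]
    have htk := ht k
    simp only [show -((k : ℤ)) - 2 = -1 - ((k + 1 : ℕ) : ℤ) by push_cast; ring] at htk
    push_cast at htk ⊢
    linear_combination htk

structure IsNormalized (g : ℤ → ℤ → ℂ) : Prop extends IsCocycle g where
  one_left : ∀ n, n ≠ -1 → g 1 n = 0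
  two_neg_one : g 2 (-1) = 0
  two_neg_two : g 2 (-2) = 0

theorem IsCocycle.exists_isNormalized_sub {f : ℤ → ℤ → ℂ} (hf : IsCocycle f) :
    ∃ h : ℤ → ℂ, h 0 = 0 ∧ IsNormalized (f - coboundary h) := by
  -- `x = h 2` and `h (-1)` are the free initial values, fixed by the conditions at `(2,-1)`
  -- and `(2,-2)`.
  set x := (f 2 (-2) - 3 * f 2 (-1) - f 1 (-2)) / 4 with hx
  obtain ⟨h, h0, h1, h2, hm1, hrec⟩ := exists_int_recurrence (f 1) x (-f 2 (-1) - 2 * x)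
  have hg := hf.sub (isCocycle_coboundary h)
  refine ⟨h, h0, ⟨hg, fun n hn => ?_, ?_, ?_⟩⟩
  · rcases (by omega : n = 0 ∨ n = 1 ∨ 2 ≤ n ∨ n ≤ -2) with rfl | rfl | hn | hn
    · exact hg.zero_right 1
    · exact hg.diag 1
    all_goals
      simp only [Pi.sub_apply, coboundary, h1, Int.cast_one, add_comm 1 n]
      linear_combination -hrec n (by omega)
  · norm_num [coboundary, h1, h2, hm1]
  · have hm2 := hrec (-2) (by norm_num)
    norm_num [hm1] at hm2
    norm_num [coboundary, h0, h2]
    linear_combination -hm2 - 4 * hx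

namespace IsNormalized

variable {g : ℤ → ℤ → ℂ} (hg : IsNormalized g)
include hg

theorem one_right {n : ℤ} (hn : n ≠ -1) : g n 1 = 0 := by
  rw [hg.antisymm, hg.one_left n hn, neg_zero]

theorem add_mul_eq {m n : ℤ} (hm : m ≠ -1) (hn : n ≠ -1) (hmn : m + n ≠ -1) :
    ((m : ℂ) + n) * g m n = ((m : ℂ) - 1) * g (m + 1) n + ((n : ℂ) - 1) * g m (n + 1) := by
  have e := hg.jacobi 1 m n
  rw [add_comm 1 m, hg.one_right hmn, hg.one_left m hm, hg.one_right hn, hg.antisymm (n + 1)] at e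
  push_cast at e
  linear_combination e

theorem apply_succ_neg_one {n : ℤ} (hn : n ≠ -1) (h0 : n ≠ 0) (h1 : n ≠ 1) :
    g (n + 1) (-1) = g n (-1) := by
  have e := hg.jacobi (-1) 1 n
  rw [neg_add_cancel, hg.zero_left, add_comm 1 n, ← sub_eq_add_neg,
    hg.one_right (by omega), hg.one_left n hn] at e
  have hne : (1 : ℂ) - n ≠ 0 := sub_ne_zero.mpr (by exact_mod_cast (Ne.symm h1))
  refine sub_eq_zero.mp ((mul_eq_zero.mp ?_).resolve_left hne)
  push_cast at e
  linear_combination e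

theorem neg_one_right {n : ℤ} (hn : n ≠ 1) : g n (-1) = 0 := by
  have pos (n : ℤ) (hn : 2 ≤ n) : g n (-1) = 0 := by
    induction n, hn using Int.leInduction with
    | base => exact hg.two_neg_one
    | succ n hn ih => rw [hg.apply_succ_neg_one (by omega) (by omega) (by omega), ih]
  have neg (n : ℤ) (hn : n ≤ -1) : g n (-1) = 0 := by
    induction n, hn using Int.leInductionDown with
    | base => exact hg.diag _
    | pred n hn ih =>
      rw [← ih, ← hg.apply_succ_neg_one (by omega) (by omega) (by omega), sub_add_cancel]
  rcases (by omega : n = 0 ∨ 2 ≤ n ∨ n ≤ -1) with rfl | hn | hn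
  · exact hg.zero_left _
  · exact pos n hn
  · exact neg n hn

theorem comp_neg : IsNormalized fun m n => g (-m) (-n) where
  toIsCocycle := hg.toIsCocycle.comp_neg
  one_left n hn := by
    rw [hg.antisymm, hg.neg_one_right (by omega), neg_zero]
  two_neg_one := by
    rw [neg_neg, hg.antisymm, hg.one_left _ (by norm_num), neg_zero]
  two_neg_two := by
    rw [neg_neg, hg.antisymm, hg.two_neg_two, neg_zero]

theorem apply_one_sub_eq_zero (m : ℤ) : g m (1 - m) = 0 := by
  have pos (a : ℤ) (ha : 2 ≤ a) : g a (1 - a) = 0 := by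
    induction a, ha using Int.leInduction with
    | base => simpa using hg.two_neg_one
    | succ a ha ih =>
      have e := hg.add_mul_eq (m := a) (n := -a) (by omega) (by omega) (by omega)
      rw [show -a + 1 = 1 - a by ring, ih] at e
      have hne : (a : ℂ) - 1 ≠ 0 := sub_ne_zero.mpr (by exact_mod_cast (by omega : a ≠ 1))
      rw [show 1 - (a + 1) = -a by ring]
      push_cast at e
      exact (mul_eq_zero.mp (by linear_combination -e)).resolve_left hne
  rcases (by omega : m = 0 ∨ m = 1 ∨ 2 ≤ m ∨ m ≤ -1) with rfl | rfl | hm | hm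
  · exact hg.zero_left 1
  · exact hg.zero_right 1
  · exact pos m hm
  · have h := pos (1 - m) (by omega)
    rw [sub_sub_cancel] at h
    rw [hg.antisymm, h, neg_zero]

theorem apply_sub_eq_zero_of_succ {s : ℤ} (hs0 : s ≠ 0) (hs1 : s ≠ -1)
    (h : ∀ m, g m (s + 1 - m) = 0) (m : ℤ) : g m (s - m) = 0 := by
  by_cases hm : m = -1
  · rw [hm, hg.antisymm, sub_neg_eq_add, hg.neg_one_right (by omega), neg_zero]
  by_cases hn : s - m = -1
  · rw [hn, hg.neg_one_right (by omega)]
  have e := hg.add_mul_eq hm hn (by omega)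
  have h₁ : g (m + 1) (s - m) = 0 := by rw [show s - m = s + 1 - (m + 1) by ring]; exact h _
  have h₂ : g m (s - m + 1) = 0 := by rw [show s - m + 1 = s + 1 - m by ring]; exact h _
  rw [h₁, h₂] at e
  have hne : (s : ℂ) ≠ 0 := by exact_mod_cast hs0
  push_cast at e
  exact (mul_eq_zero.mp (by linear_combination e)).resolve_left hne

theorem apply_sub_eq_zero_of_le_neg_one {s : ℤ} (hs : s ≤ -1) (m : ℤ) : g m (s - m) = 0 := by
  induction s, hs using Int.leInductionDown generalizing m with
  | base =>
    have h := hg.comp_neg.apply_one_sub_eq_zero (-m)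
    rwa [neg_neg, show -(1 - -m) = -1 - m by ring] at h
  | pred s hs ih => exact hg.apply_sub_eq_zero_of_succ (by omega) (by omega) (by simpa using ih) m

theorem eq_zero_of_add_ne_zero {m n : ℤ} (h : m + n ≠ 0) : g m n = 0 := by
  rcases h.lt_or_gt with h | h
  · simpa using hg.apply_sub_eq_zero_of_le_neg_one (by omega : m + n ≤ -1) m
  · simpa using hg.comp_neg.apply_sub_eq_zero_of_le_neg_one (by omega : -(m + n) ≤ -1) (-m)

theorem antidiag_succ (m : ℤ) :
    (1 - (m : ℂ)) * g (m + 1) (-(m + 1)) = (2 * m + 1) * g 1 (-1) - (m + 2) * g m (-m) := by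
  have e := hg.jacobi 1 m (-1 - m)
  rw [add_comm 1 m, show m + (-1 - m) = -1 by ring, show -1 - m + 1 = -m by ring,
    show -1 - m = -(m + 1) by ring, hg.eq_zero_of_add_ne_zero (by omega : m + -(m + 1) ≠ 0),
    hg.antisymm (-1), hg.antisymm (-m)] at e
  have h₁ : ((1 : ℂ) + m) * g 1 m = 0 := by
    rcases eq_or_ne m (-1) with rfl | hm
    · norm_num
    · rw [hg.one_left m hm, mul_zero]
  have h₂ : (m : ℂ) * g (-(m + 1)) 1 = 0 := by
    rcases eq_or_ne m 0 with rfl | hm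
    · norm_num
    · rw [hg.one_right (by omega), mul_zero]
  push_cast at e
  linear_combination e - h₁ + h₂

theorem antidiag_eq (m : ℤ) : g m (-m) = g 1 (-1) * (4 * m - m ^ 3) / 3 := by
  have pos (m : ℤ) (hm : 2 ≤ m) : g m (-m) = g 1 (-1) * (4 * m - m ^ 3) / 3 := by
    induction m, hm using Int.leInduction with
    | base => norm_num [hg.two_neg_two]
    | succ m hm ih =>
      have hne : (1 : ℂ) - m ≠ 0 := sub_ne_zero.mpr (by exact_mod_cast (by omega : 1 ≠ m))
      refine mul_left_cancel₀ hne ?_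
      rw [hg.antidiag_succ, ih]
      push_cast
      ring
  rcases (by omega : m = 0 ∨ m = 1 ∨ 2 ≤ m ∨ m = -1 ∨ m ≤ -2) with rfl | rfl | hm | rfl | hm
  · norm_num [hg.zero_left]
  · norm_num
  · exact pos m hm
  · rw [neg_neg, hg.antisymm]
    norm_num
    ring
  · have h := pos (-m) (by omega)
    rw [neg_neg] at h
    rw [hg.antisymm, h]
    push_cast
    ring

theorem exists_eq_virasoro_add_coboundary :
    ∃ (c : ℂ) (h : ℤ → ℂ), h 0 = 0 ∧ ∀ m n, g m n = c * virasoro m n + coboundary h m n := by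
  refine ⟨-4 * g 1 (-1), fun z => if z = 0 then 0 else -g 1 (-1) / 2, if_pos rfl, fun m n => ?_⟩
  rw [coboundary_ite, virasoro]
  split_ifs with h
  · rw [show n = -m by omega, hg.antidiag_eq]
    ring
  · rw [hg.eq_zero_of_add_ne_zero (by omega)]
    ring

end IsNormalized

theorem IsCocycle.exists_eq_virasoro_add_coboundary {f : ℤ → ℤ → ℂ} (hf : IsCocycle f) :
    ∃ (c : ℂ) (h : ℤ → ℂ), h 0 = 0 ∧ ∀ m n, f m n = c * virasoro m n + coboundary h m n := by
  obtain ⟨h, h0, hg⟩ := hf.exists_isNormalized_sub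
  obtain ⟨c, h', h'0, hfh⟩ := hg.exists_eq_virasoro_add_coboundary
  refine ⟨c, h' + h, by simp [h0, h'0], fun m n => ?_⟩
  have e := hfh m n
  rw [Pi.sub_apply, Pi.sub_apply] at e
  rw [coboundary_add]
  linear_combination e

theorem virasoro_ne_coboundary (h : ℤ → ℂ) : ¬ ∀ m n, virasoro m n = coboundary h m n := by
  intro hv
  have e₁ := hv 1 (-1)
  have e₂ := hv 2 (-1)
  have e₃ := hv 1 (-2)
  have e₄ := hv 2 (-2)
  norm_num [virasoro, coboundary] at e₁ e₂ e₃ e₄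
  have : (1 : ℂ) / 2 = 0 := by linear_combination e₄ - 2 * e₁ - e₂ - e₃
  norm_num at this

section LieAlgebra

variable {V : Type*} [LieRing V] [LieAlgebra ℂ V] {K : ℤ → V}

theorem lie_eq (hK0 : K 0 = 0)
    (hbr : ∀ m n : ℤ, m ≠ -n →
      ⁅K m, K n⁆ = ((m : ℂ) - n) • K (m + n) - (m : ℂ) • K m + (n : ℂ) • K n)
    (hbr' : ∀ m : ℤ, ⁅K m, K (-m)⁆ = -((m : ℂ) • K m) - (m : ℂ) • K (-m)) (m n : ℤ) :
    ⁅K m, K n⁆ = ((m : ℂ) - n) • K (m + n) - (m : ℂ) • K m + (n : ℂ) • K n := by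
  rcases eq_or_ne m (-n) with h | h
  · obtain rfl : n = -m := by omega
    rw [hbr', add_neg_cancel, hK0, smul_zero]
    push_cast
    module
  · exact hbr m n h

theorem map_lie_eq_coboundary
    (hK : ∀ m n : ℤ, ⁅K m, K n⁆ = ((m : ℂ) - n) • K (m + n) - (m : ℂ) • K m + (n : ℂ) • K n)
    (μ : V →ₗ[ℂ] ℂ) (m n : ℤ) : μ ⁅K m, K n⁆ = coboundary (fun j => μ (K j)) m n := by
  simp [hK, coboundary]

theorem isCocycle_of_lie
    (hK : ∀ m n : ℤ, ⁅K m, K n⁆ = ((m : ℂ) - n) • K (m + n) - (m : ℂ) • K m + (n : ℂ) • K n)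
    (hK0 : K 0 = 0) (ω : V →ₗ[ℂ] V →ₗ[ℂ] ℂ) (hanti : ∀ x y : V, ω x y = -ω y x)
    (hcoc : ∀ x y z : V, ω ⁅x, y⁆ z + ω ⁅y, z⁆ x + ω ⁅z, x⁆ y = 0) :
    IsCocycle fun m n => ω (K m) (K n) where
  zero_right m := by simp [hK0]
  antisymm m n := hanti _ _
  cocycle l m n := by
    have hflip (x y z : V) : ω ⁅x, y⁆ z = ω.flip z ⁅x, y⁆ := rfl
    have e := hcoc (K l) (K m) (K n)
    rwa [hflip, hflip, hflip, map_lie_eq_coboundary hK, map_lie_eq_coboundary hK,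
      map_lie_eq_coboundary hK] at e

theorem exists_linearMap_apply_eq (hK0 : K 0 = 0) (b : Module.Basis {n : ℤ // n ≠ 0} ℂ V)
    (hb : ∀ n : {n : ℤ // n ≠ 0}, b n = K n.1) (h : ℤ → ℂ) (h0 : h 0 = 0) :
    ∃ μ : V →ₗ[ℂ] ℂ, ∀ j, μ (K j) = h j := by
  refine ⟨b.constr ℂ fun i => h i, fun j => ?_⟩
  rcases eq_or_ne j 0 with rfl | hj
  · rw [hK0, map_zero, h0]
  · rw [← hb ⟨j, hj⟩, Module.Basis.constr_basis]

end LieAlgebra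

end KZero

/-- `H²(K₀, ℂ)` is one dimensional: every 2-cocycle is cohomologous to a scalar multiple of
the Virasoro cocycle `ω (K m) (K n) = δ_{m,-n} m(m²-1)/12`, and that cocycle is not a
coboundary. -/
theorem stmt5 (V : Type) [LieRing V] [LieAlgebra ℂ V] (K : ℤ → V)
    (hK0 : K 0 = 0)
    (hbr : ∀ m n : ℤ, m ≠ -n →
      ⁅K m, K n⁆ = ((m : ℂ) - n) • K (m + n) - (m : ℂ) • K m + (n : ℂ) • K n)
    (hbr' : ∀ m : ℤ, ⁅K m, K (-m)⁆ = -((m : ℂ) • K m) - (m : ℂ) • K (-m))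
    (b : Module.Basis {n : ℤ // n ≠ 0} ℂ V) (hb : ∀ n : {n : ℤ // n ≠ 0}, b n = K n.1)
    (ω : V →ₗ[ℂ] V →ₗ[ℂ] ℂ)
    (hanti : ∀ x y : V, ω x y = - ω y x)
    (hcoc : ∀ x y z : V, ω ⁅x, y⁆ z + ω ⁅y, z⁆ x + ω ⁅z, x⁆ y = 0) :
    (∃ c : ℂ, ∃ μ : V →ₗ[ℂ] ℂ, ∀ m n : ℤ,
      ω (K m) (K n) =
        c * (if m = -n then (m : ℂ) * ((m : ℂ) ^ 2 - 1) / 12 else 0) + μ ⁅K m, K n⁆) ∧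
    ¬ ∃ μ : V →ₗ[ℂ] ℂ, ∀ m n : ℤ,
      (if m = -n then (m : ℂ) * ((m : ℂ) ^ 2 - 1) / 12 else 0) = μ ⁅K m, K n⁆ := by
  have hK := KZero.lie_eq hK0 hbr hbr'
  refine ⟨?_, fun ⟨μ, hμ⟩ => KZero.virasoro_ne_coboundary _ fun m n =>
    (hμ m n).trans (KZero.map_lie_eq_coboundary hK μ m n)⟩
  obtain ⟨c, h, h0, hω⟩ :=
    (KZero.isCocycle_of_lie hK hK0 ω hanti hcoc).exists_eq_virasoro_add_coboundary
  obtain ⟨μ, hμ⟩ := KZero.exists_linearMap_apply_eq hK0 b hb h h0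
  refine ⟨c, μ, fun m n => ?_⟩
  rw [KZero.map_lie_eq_coboundary hK, funext hμ]
  exact hω m n
end

section
/- For λ ≠ 0, the *-automorphism Λ of 𝒦 given by Λ(K_n) = K_n + inλC, Λ(C) = C does not extend to a *-automorphism of the Virasoro algebra. -/
/-!
Let `φ` be the coordinate of `C` in the basis `{L n} ∪ {C}`. By the bracket relations,
`φ ⁅L k, w⁆ = k (k² - 1) / 12 · (coefficient of L (-k) in w)`, which vanishes for `k ∈ {0, ±1}`.
Suppose a Lie endomorphism `Ψ` maps `L n - L 0` to `L n - L 0 + a n • C` and put `x = Ψ (L 0)`.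
For `n = ±1`, applying `Ψ` to `⁅L 0, L n⁆ = -n L n` gives
`-n Ψ (L n) = ⁅x, x + L n - L 0 + a n • C⁆ = ⁅x, L n - L 0⁆`, whose `φ`-coordinate vanishes.
Hence `φ x + a n = 0` for both `n = 1` and `n = -1`, i.e. `a 1 = a (-1)`, whereas
`a n = i n λ` forces `a 1 = -a (-1) ≠ 0`.
-/

namespace Virasoro

variable {𝕜 W : Type*} [Field 𝕜] [LieRing W] [LieAlgebra 𝕜 W]
  {L : ℤ → W} {Cc : W} {b : Module.Basis (ℤ ⊕ Unit) 𝕜 W}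

theorem coord_L (hb1 : ∀ n : ℤ, b (Sum.inl n) = L n) (i : ℤ ⊕ Unit) (m : ℤ) :
    b.coord i (L m) = if Sum.inl m = i then 1 else 0 := by
  rw [← hb1, Module.Basis.coord_apply, Module.Basis.repr_self, Finsupp.single_apply]

theorem coord_C (hb2 : b (Sum.inr ()) = Cc) (i : ℤ ⊕ Unit) :
    b.coord i Cc = if Sum.inr () = i then 1 else 0 := by
  rw [← hb2, Module.Basis.coord_apply, Module.Basis.repr_self, Finsupp.single_apply]

theorem coord_central_lie_L
    (hb1 : ∀ n : ℤ, b (Sum.inl n) = L n) (hb2 : b (Sum.inr ()) = Cc)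
    (hC : ∀ x : W, ⁅Cc, x⁆ = 0)
    (hbr : ∀ m n : ℤ, ⁅L m, L n⁆ = ((m : 𝕜) - n) • L (m + n) +
      (if n = -m then (m : 𝕜) * ((m : 𝕜) ^ 2 - 1) / 12 else 0) • Cc)
    (k : ℤ) (w : W) :
    b.coord (Sum.inr ()) ⁅L k, w⁆ =
      (k : 𝕜) * ((k : 𝕜) ^ 2 - 1) / 12 * b.coord (Sum.inl (-k)) w := by
  have hcoord : b.coord (Sum.inr ()) ∘ₗ LieAlgebra.ad 𝕜 W (L k) =
      ((k : 𝕜) * ((k : 𝕜) ^ 2 - 1) / 12) • b.coord (Sum.inl (-k)) := by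
    refine b.ext ?_
    rintro (m | ⟨⟩)
    · simp only [LinearMap.comp_apply, LieAlgebra.ad_apply, LinearMap.smul_apply, hb1, hbr,
        map_add, map_smul, coord_L hb1, coord_C hb2, smul_eq_mul]
      split_ifs <;> simp_all
    · rw [LinearMap.comp_apply, LieAlgebra.ad_apply, hb2, ← lie_skew, hC, LinearMap.smul_apply,
        coord_C hb2]
      simp
  simpa using LinearMap.congr_fun hcoord w

theorem coord_central_map_L_zero_eq_neg (f : W →ₗ⁅𝕜⁆ W)
    (hb1 : ∀ n : ℤ, b (Sum.inl n) = L n) (hb2 : b (Sum.inr ()) = Cc)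
    (hC : ∀ x : W, ⁅Cc, x⁆ = 0)
    (hbr : ∀ m n : ℤ, ⁅L m, L n⁆ = ((m : 𝕜) - n) • L (m + n) +
      (if n = -m then (m : 𝕜) * ((m : 𝕜) ^ 2 - 1) / 12 else 0) • Cc)
    {n : ℤ} (hn : n = 1 ∨ n = -1) {a : 𝕜} (hf : f (L n - L 0) = L n - L 0 + a • Cc) :
    b.coord (Sum.inr ()) (f (L 0)) = -a := by
  set φ := b.coord (Sum.inr ())
  have hn0 : n ≠ 0 := by omega
  have hfLn : f (L n) = f (L 0) + (L n - L 0) + a • Cc := by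
    rw [add_assoc, ← hf, map_sub]
    abel
  have hφfLn : φ (f (L n)) = φ (f (L 0)) + a := by
    rw [hfLn, map_add, map_add, map_sub, map_smul, coord_L hb1, coord_L hb1, coord_C hb2]
    simp
  have hLn : ⁅L 0, L n⁆ = -(n : 𝕜) • L n := by
    rw [hbr]
    simp [hn0]
  have hcentral : φ ⁅f (L 0), L n - L 0⁆ = 0 := by
    rw [← lie_skew, sub_lie, map_neg, map_sub, coord_central_lie_L hb1 hb2 hC hbr,
      coord_central_lie_L hb1 hb2 hC hbr]
    rcases hn with rfl | rfl <;> simp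
  have hx : ⁅f (L 0), f (L n)⁆ = ⁅f (L 0), L n - L 0⁆ := by
    rw [hfLn, lie_add, lie_add, lie_self, lie_smul, ← lie_skew _ Cc, hC]
    simp
  have hφ_bracket : (n : 𝕜) * φ (f (L n)) = 0 := by
    have h := congrArg φ (f.map_lie (L 0) (L n))
    rw [hLn, map_smul, hx, hcentral, map_smul, smul_eq_mul] at h
    linear_combination -h
  have hn_unit : (n : 𝕜) ≠ 0 := by rcases hn with rfl | rfl <;> simp
  have hφfLn_zero : φ (f (L n)) = 0 := (mul_eq_zero.mp hφ_bracket).resolve_left hn_unit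
  linear_combination hφfLn_zero - hφfLn

end Virasoro

theorem stmt7_general (W : Type) [LieRing W] [LieAlgebra ℂ W]
    (L : ℤ → W) (Cc : W)
    (b : Module.Basis (ℤ ⊕ Unit) ℂ W)
    (hb1 : ∀ n : ℤ, b (Sum.inl n) = L n) (hb2 : b (Sum.inr ()) = Cc)
    (hC : ∀ x : W, ⁅Cc, x⁆ = 0)
    (hbr : ∀ m n : ℤ, ⁅L m, L n⁆ = ((m : ℂ) - n) • L (m + n) +
      (if n = -m then (m : ℂ) * ((m : ℂ) ^ 2 - 1) / 12 else 0) • Cc)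
    (st : W →ₛₗ[starRingEnd ℂ] W)
    (lam : ℝ) (hlam : lam ≠ 0) :
    ¬ ∃ Ψ : W ≃ₗ[ℂ] W, (∀ x y : W, Ψ ⁅x, y⁆ = ⁅Ψ x, Ψ y⁆) ∧
      (∀ x : W, Ψ (st x) = st (Ψ x)) ∧
      (∀ n : ℤ, n ≠ 0 → Ψ (L n - L 0) = (L n - L 0) + (Complex.I * n * lam) • Cc) ∧
      Ψ Cc = Cc := by
  rintro ⟨Ψ, hΨ_lie, -, hΨ_K, -⟩
  let f : W →ₗ⁅ℂ⁆ W := { Ψ.toLinearMap with map_lie' := hΨ_lie _ _ }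
  have h_one := Virasoro.coord_central_map_L_zero_eq_neg f hb1 hb2 hC hbr (Or.inl rfl)
    (hΨ_K 1 one_ne_zero)
  have h_neg_one := Virasoro.coord_central_map_L_zero_eq_neg f hb1 hb2 hC hbr (Or.inr rfl)
    (hΨ_K (-1) (by norm_num))
  have h_lam : Complex.I * lam = 0 := by
    push_cast at h_one h_neg_one
    linear_combination (h_one - h_neg_one) / 2
  simp [Complex.I_ne_zero, hlam] at h_lam

/-- For `λ ≠ 0`, the *-automorphism `Λ` of `𝒦` with `Λ (K n) = K n + i n λ C`, `Λ C = C`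
does not extend to a *-automorphism of the Virasoro algebra. -/
theorem stmt7 (W : Type) [LieRing W] [LieAlgebra ℂ W]
    (L : ℤ → W) (Cc : W)
    (b : Module.Basis (ℤ ⊕ Unit) ℂ W)
    (hb1 : ∀ n : ℤ, b (Sum.inl n) = L n) (hb2 : b (Sum.inr ()) = Cc)
    (hC : ∀ x : W, ⁅Cc, x⁆ = 0)
    (hbr : ∀ m n : ℤ, ⁅L m, L n⁆ = ((m : ℂ) - n) • L (m + n) +
      (if n = -m then (m : ℂ) * ((m : ℂ) ^ 2 - 1) / 12 else 0) • Cc)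
    (st : W →ₛₗ[starRingEnd ℂ] W)
    (hstL : ∀ n : ℤ, st (L n) = L (-n)) (hstC : st Cc = Cc)
    (lam : ℝ) (hlam : lam ≠ 0) :
    ¬ ∃ Ψ : W ≃ₗ[ℂ] W, (∀ x y : W, Ψ ⁅x, y⁆ = ⁅Ψ x, Ψ y⁆) ∧
      (∀ x : W, Ψ (st x) = st (Ψ x)) ∧
      (∀ n : ℤ, n ≠ 0 → Ψ (L n - L 0) = (L n - L 0) + (Complex.I * n * lam) • Cc) ∧
      Ψ Cc = Cc :=
  stmt7_general W L Cc b hb1 hb2 hC hbr st lam hlam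
end

section
/- With M^k_n defined by M^0_n = L_n - L_{n+1} and M^{k+1}_n = M^k_n - M^k_{n+1} in the Witt algebra, the commutation relation [M^k_m, M^k_n] = (m-n) M^{2k+1}_{m+n} holds for all k ≥ 0 and m, n ∈ ℤ. -/
/-! Writing `ΔX n = X n - X (n + 1)`, a relation `⁅X m, X n⁆ = (m - n) Y (m + n)` implies
`⁅ΔX m, ΔX n⁆ = (m - n) Δ²Y (m + n)`: the four brackets of the expansion carry the coefficients
`m - n`, `m - n - 1`, `m - n + 1`, `m - n`, and the middle two combine. Starting from `X = Y = L`
and iterating gives the theorem, since `M^{2k+3} = Δ²M^{2k+1}`. -/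

theorem lie_sub_shift_of_lie_eq_smul {R W : Type*} [CommRing R] [LieRing W] [LieAlgebra R W]
    {X Y : ℤ → W} (h : ∀ m n : ℤ, ⁅X m, X n⁆ = ((m : R) - n) • Y (m + n)) (m n : ℤ) :
    ⁅X m - X (m + 1), X n - X (n + 1)⁆ =
      ((m : R) - n) • ((Y (m + n) - Y (m + n + 1)) - (Y (m + n + 1) - Y (m + n + 1 + 1))) := by
  simp only [sub_lie, lie_sub, h]
  rw [show m + 1 + n = m + n + 1 by ring, show m + (n + 1) = m + n + 1 by ring,
    show m + 1 + (n + 1) = m + n + 1 + 1 by ring]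
  push_cast
  module

/-- In the Witt algebra, with `M⁰_n = L_n - L_{n+1}` and `M^{k+1}_n = M^k_n - M^k_{n+1}`,
the relation `⁅M^k_m, M^k_n⁆ = (m-n) M^{2k+1}_{m+n}` holds. -/
theorem stmt14 (W : Type) [LieRing W] [LieAlgebra ℂ W] (L : ℤ → W)
    (hL : ∀ m n : ℤ, ⁅L m, L n⁆ = ((m : ℂ) - n) • L (m + n))
    (M : ℕ → ℤ → W)
    (hM0 : ∀ n : ℤ, M 0 n = L n - L (n + 1))
    (hMs : ∀ (k : ℕ) (n : ℤ), M (k + 1) n = M k n - M k (n + 1)) :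
    ∀ (k : ℕ) (m n : ℤ), ⁅M k m, M k n⁆ = ((m : ℂ) - n) • M (2 * k + 1) (m + n) := by
  intro k
  induction k with
  | zero =>
    intro m n
    rw [hM0, hM0, hMs, hM0, hM0]
    exact lie_sub_shift_of_lie_eq_smul hL m n
  | succ k ih =>
    intro m n
    rw [show 2 * (k + 1) + 1 = 2 * k + 1 + 1 + 1 by ring, hMs k, hMs k, hMs (2 * k + 1 + 1),
      hMs (2 * k + 1), hMs (2 * k + 1)]
    exact lie_sub_shift_of_lie_eq_smul ih m n
end

section
/- The derived subalgebra of K_k equals K_{2k+1}, where K_k = {x ∈ Witt : φ_0(x) = φ_1(x) = ⋯ = φ_k(x) = 0} and φ_j(L_n) = i(in)^j (with φ_0(L_n) = i). -/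
/-!
Write `V r` for the span of the iterated forward differences `Δ^r L n` (the `M^k_n` of the paper
are `± Δ^(k+1) L n`). As `φ p (L n) = i^(p+1) n^p` is polynomial of degree `p` in `n`, the functional
`φ p` kills `Δ^r L` for `p < r` and is the nonzero constant `i^(r+1) r!` on `Δ^r L`. Together with
`V r = V (r+1) + ℂ Δ^r L 0` this gives `K_j = V (j+1)` by induction on `j`. Finally
`⁅Δ^r L a, Δ^r L c⁆ = (a - c) Δ^(2r) L (a + c)`, so the brackets of `V (k+1)` span `V (2k+2)`.
-/

open Submodule Set
open scoped fwdDiff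

section fwdDiff

lemma map_fwdDiff_iter {M G G' F : Type*} [AddCommMonoid M] [AddCommGroup G] [AddCommGroup G']
    [FunLike F G G'] [AddMonoidHomClass F G G'] (g : F) (h : M) (f : M → G) (n : ℕ) (y : M) :
    g (Δ_[h] ^[n] f y) = Δ_[h] ^[n] (g ∘ f) y := by
  induction n generalizing f with
  | zero => rfl
  | succ n ih =>
    have hcomm : g ∘ Δ_[h] f = Δ_[h] (g ∘ f) := funext fun _ => map_sub g _ _
    rw [Function.iterate_succ_apply, ih, hcomm, Function.iterate_succ_apply]

variable {R M : Type*} [Ring R] [AddCommGroup M] [Module R M]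

lemma sub_mem_span_range_fwdDiff (f : ℤ → M) (n : ℤ) :
    f n - f 0 ∈ span R (range (Δ_[1] f)) := by
  induction n using Int.induction_on with
  | zero => simp
  | succ n ih =>
    have hstep : f (n + 1) - f 0 = (f n - f 0) + Δ_[1] f n := by simp [fwdDiff]
    rw [hstep]
    exact add_mem ih (subset_span ⟨n, rfl⟩)
  | pred n ih =>
    have hstep : f (-n - 1) - f 0 = (f (-n) - f 0) - Δ_[1] f (-n - 1) := by simp [fwdDiff]
    rw [hstep]
    exact sub_mem ih (subset_span ⟨_, rfl⟩)

lemma span_range_le_span_range_fwdDiff_sup (f : ℤ → M) :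
    span R (range f) ≤ span R (range (Δ_[1] f)) ⊔ R ∙ f 0 :=
  span_le.2 <| by
    rintro _ ⟨n, rfl⟩
    rw [← sub_add_cancel (f n) (f 0)]
    exact add_mem (mem_sup_left (sub_mem_span_range_fwdDiff f n))
      (mem_sup_right (mem_span_singleton_self _))

lemma mem_span_range_fwdDiff_of_map_eq_zero {K : Type*} [Field K] [Module K M] (f : ℤ → M)
    (ψ : M →ₗ[K] K) (hψ : ∀ n, ψ (Δ_[1] f n) = 0) (h0 : ψ (f 0) ≠ 0) {x : M}
    (hx : x ∈ span K (range f)) (hψx : ψ x = 0) : x ∈ span K (range (Δ_[1] f)) := by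
  obtain ⟨v, hv, w, hw, rfl⟩ := mem_sup.1 (span_range_le_span_range_fwdDiff_sup f hx)
  obtain ⟨c, rfl⟩ := mem_span_singleton.1 hw
  have hψv : ψ v = 0 := span_le (p := LinearMap.ker ψ) |>.2 (by rintro _ ⟨n, rfl⟩; exact hψ n) hv
  have hc : c = 0 := by simpa [hψv, h0] using hψx
  simpa [hc] using hv

end fwdDiff

section Witt

variable {W : Type*} [LieRing W] (L : ℤ → W)

lemma lie_fwdDiff_iter {R : Type*} [CommRing R] [LieAlgebra R W]
    (hL : ∀ m n : ℤ, ⁅L m, L n⁆ = ((m : R) - n) • L (m + n)) (r : ℕ) (a c : ℤ) :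
    ⁅Δ_[1] ^[r] L a, Δ_[1] ^[r] L c⁆ = ((a : R) - c) • Δ_[1] ^[2 * r] L (a + c) := by
  induction r generalizing a c with
  | zero => exact hL a c
  | succ r ih =>
    rw [show 2 * (r + 1) = 2 * r + 1 + 1 by ring]
    simp only [Function.iterate_succ_apply', fwdDiff, lie_sub, sub_lie, ih]
    rw [show a + 1 + (c + 1) = a + c + 1 + 1 by ring, show a + (c + 1) = a + c + 1 by ring,
      show a + 1 + c = a + c + 1 by ring]
    push_cast
    module

lemma span_lie_span_range_fwdDiff_iter {K : Type*} [Field K] [CharZero K] [LieAlgebra K W]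
    (hL : ∀ m n : ℤ, ⁅L m, L n⁆ = ((m : K) - n) • L (m + n)) (r : ℕ) :
    span K {z : W | ∃ x ∈ span K (range (Δ_[1] ^[r] L)), ∃ y ∈ span K (range (Δ_[1] ^[r] L)),
      z = ⁅x, y⁆} = span K (range (Δ_[1] ^[2 * r] L)) := by
  let bracket : W →ₗ[K] W →ₗ[K] W := LieModule.toEnd K W W
  apply le_antisymm
  · refine span_le.2 ?_
    rintro _ ⟨x, hx, y, hy, rfl⟩
    have hxy := apply_mem_map₂ bracket hx hy
    rw [map₂_span_span] at hxy
    refine span_le.2 ?_ hxy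
    rintro _ ⟨_, ⟨a, rfl⟩, _, ⟨c, rfl⟩, rfl⟩
    simp only [bracket, LieHom.coe_toLinearMap, LieModule.toEnd_apply_apply, SetLike.mem_coe,
      lie_fwdDiff_iter L hL]
    exact smul_mem _ _ (subset_span ⟨_, rfl⟩)
  · refine span_le.2 ?_
    rintro _ ⟨n, rfl⟩
    obtain ⟨a, c, rfl, hac⟩ : ∃ a c : ℤ, a + c = n ∧ a ≠ c := by
      rcases eq_or_ne n 0 with rfl | hn
      · exact ⟨1, -1, by norm_num, by norm_num⟩
      · exact ⟨n, 0, add_zero n, hn⟩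
    have hac' : (a : K) - c ≠ 0 := sub_ne_zero.2 (Int.cast_injective.ne hac)
    rw [← inv_smul_smul₀ hac' (Δ_[1] ^[2 * r] L (a + c)), ← lie_fwdDiff_iter L hL]
    exact smul_mem _ _ (subset_span ⟨_, subset_span ⟨a, rfl⟩, _, subset_span ⟨c, rfl⟩, rfl⟩)

variable [LieAlgebra ℂ W] (φ : ℕ → (W →ₗ[ℂ] ℂ))
    (hφ : ∀ (j : ℕ) (n : ℤ), φ j (L n) = Complex.I * (Complex.I * n) ^ j)
include hφ

lemma apply_fwdDiff_iter (p r : ℕ) (n : ℤ) :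
    φ p (Δ_[1] ^[r] L n) = Complex.I ^ (p + 1) * (Δ_[1] ^[r] (fun m : ℤ => m ^ p) n : ℤ) := by
  have hφL : φ p ∘ L = Complex.I ^ (p + 1) • (Int.castAddHom ℂ ∘ fun m : ℤ => m ^ p) := by
    funext m
    simp only [Function.comp_apply, Pi.smul_apply, smul_eq_mul, Int.coe_castAddHom, Int.cast_pow,
      hφ]
    ring
  rw [map_fwdDiff_iter, hφL, fwdDiff_iter_const_smul, Pi.smul_apply, ← map_fwdDiff_iter]
  rfl

lemma apply_fwdDiff_iter_of_lt {p r : ℕ} (hpr : p < r) (n : ℤ) : φ p (Δ_[1] ^[r] L n) = 0 := by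
  simp [apply_fwdDiff_iter L φ hφ, fwdDiff_iter_pow_eq_zero_of_lt hpr]

lemma apply_fwdDiff_iter_self_ne_zero (r : ℕ) (n : ℤ) : φ r (Δ_[1] ^[r] L n) ≠ 0 := by
  simp [apply_fwdDiff_iter L φ hφ, fwdDiff_iter_eq_factorial, Nat.factorial_ne_zero]


lemma mem_span_range_fwdDiff_iter_of_apply_eq_zero (b : Module.Basis ℤ ℂ W)
    (hb : ∀ n : ℤ, b n = L n) (j : ℕ) {x : W} (hx : ∀ i < j, φ i x = 0) :
    x ∈ span ℂ (range (Δ_[1] ^[j] L)) := by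
  induction j with
  | zero =>
    have hrange : range L = range b := congrArg range (funext hb).symm
    simp [hrange, b.span_eq]
  | succ j ih =>
    have hkill (n : ℤ) : φ j (Δ_[1] (Δ_[1] ^[j] L) n) = 0 := by
      rw [← Function.iterate_succ_apply' (Δ_[1])]
      exact apply_fwdDiff_iter_of_lt L φ hφ j.lt_succ_self n
    rw [Function.iterate_succ']
    exact mem_span_range_fwdDiff_of_map_eq_zero _ (φ j) hkill
      (apply_fwdDiff_iter_self_ne_zero L φ hφ j 0)
      (ih fun i hi => hx i (hi.trans j.lt_succ_self)) (hx j j.lt_succ_self)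

lemma iInf_ker_eq_span_range_fwdDiff_iter (b : Module.Basis ℤ ℂ W) (hb : ∀ n : ℤ, b n = L n)
    (j : ℕ) :
    ⨅ i ∈ Finset.range (j + 1), LinearMap.ker (φ i) = span ℂ (range (Δ_[1] ^[j + 1] L)) := by
  apply le_antisymm
  · intro x hx
    simp only [mem_iInf, Finset.mem_range, LinearMap.mem_ker] at hx
    exact mem_span_range_fwdDiff_iter_of_apply_eq_zero L φ hφ b hb (j + 1) hx
  · refine span_le.2 ?_
    rintro _ ⟨n, rfl⟩
    simp only [SetLike.mem_coe, mem_iInf, Finset.mem_range, LinearMap.mem_ker]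
    exact fun i hi => apply_fwdDiff_iter_of_lt L φ hφ hi n

end Witt

/-- The derived subalgebra of `K_k` equals `K_{2k+1}`, where
`K_k = {x ∈ Witt : φ₀(x) = ⋯ = φ_k(x) = 0}` and `φ_j (L n) = i (i n)^j`. -/
theorem stmt15 (W : Type) [LieRing W] [LieAlgebra ℂ W] (L : ℤ → W)
    (b : Module.Basis ℤ ℂ W) (hb : ∀ n : ℤ, b n = L n)
    (hL : ∀ m n : ℤ, ⁅L m, L n⁆ = ((m : ℂ) - n) • L (m + n))
    (φ : ℕ → (W →ₗ[ℂ] ℂ))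
    (hφ : ∀ (j : ℕ) (n : ℤ), φ j (L n) = Complex.I * (Complex.I * n) ^ j)
    (k : ℕ) :
    let Kk : ℕ → Submodule ℂ W := fun j => ⨅ i ∈ Finset.range (j + 1), LinearMap.ker (φ i)
    Submodule.span ℂ {z : W | ∃ x ∈ Kk k, ∃ y ∈ Kk k, z = ⁅x, y⁆} = Kk (2 * k + 1) := by
  intro Kk
  simp only [Kk, iInf_ker_eq_span_range_fwdDiff_iter L φ hφ b hb]
  rw [span_lie_span_range_fwdDiff_iter L hL, show 2 * k + 1 + 1 = 2 * (k + 1) by ring]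
end
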